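/- arXiv:1908.01135 — 2 statements merged into one kernel-verified Lean document; each statement's English description precedes it below -/
import Mathlib

section
/- Let $0 < \beta < 1$, and let $m, w, g, m_1 \in [0,1]$ with $m \cdot m_1 = m^2 + w$ and $w \geq 0$. If $\frac{g}{1-\beta} \geq m + (1-m)\cdot\frac{g\beta}{1-\beta} + m\left(m_1\beta + \frac{g\beta^2}{1-\beta}\right)$, then $g \geq m + \frac{\beta w}{1 + m\beta} \geq m + \frac{\beta w}{2}$. -/
/-- key algebraic step of the Gittins index lower bound. -/
theorem stmt2 (β m w g m1 : ℝ) (hβ : β ∈ Set.Ioo (0:ℝ) 1)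
    (hm : m ∈ Set.Icc (0:ℝ) 1) (hg : g ∈ Set.Icc (0:ℝ) 1)
    (hm1 : m1 ∈ Set.Icc (0:ℝ) 1) (hw : 0 ≤ w)
    (hmoment : m * m1 = m^2 + w)
    (hineq : g / (1 - β) ≥ m + (1 - m) * (g * β / (1 - β)) + m * (m1 * β + g * β^2 / (1 - β))) :
    g ≥ m + β * w / (1 + m * β) ∧ m + β * w / (1 + m * β) ≥ m + β * w / 2 := by
  obtain ⟨hβ0, hβ1⟩ := hβ
  obtain ⟨hm0, hm1'⟩ := hm
  have h1β : (0:ℝ) < 1 - β := by linarith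
  have hd : (0:ℝ) < 1 + m * β := by nlinarith
  have key : g * (1 - β) * (1 + m * β) ≥ (1 - β) * (m + (m^2 + w) * β) := by
    have := mul_le_mul_of_nonneg_right hineq (le_of_lt h1β)
    field_simp at this
    nlinarith [this]
  have h2 : g * (1 + m * β) ≥ m + (m^2 + w) * β := by nlinarith
  constructor
  · rw [ge_iff_le, ← sub_nonneg]
    have : g - (m + β * w / (1 + m * β)) = (g * (1 + m * β) - (m + (m^2 + w) * β)) / (1 + m * β) := by
      field_simp; ring
    rw [this]
    apply div_nonneg (by linarith) hd.le
  · have h12 : 1 + m * β ≤ 2 := by nlinarith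
    gcongr
end

section
/- Let $\beta \in (1/2, 1)$ and $p, m \in [0,1]$ with $p < m$. Then for all sufficiently large $k \in \mathbb{N}$, $\frac{2m}{1-\beta} - \frac{m-p}{1-\beta^k} > \frac{m}{1-\beta} + m + \frac{\beta p}{1-\beta}$; more specifically, this inequality holds whenever $1-\beta < \beta(1-\beta^k)$. -/
lemma stmt15_main (β p m : ℝ) (hβ1 : 1/2 < β) (hβ2 : β < 1) (hpm : p < m)
    (k : ℕ) (h : 1 - β < β * (1 - β^k)) :
    2 * m / (1 - β) - (m - p) / (1 - β^k) > m / (1 - β) + m + β * p / (1 - β) := by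
  have ha : (0:ℝ) < 1 - β := by linarith
  have hβ0 : (0:ℝ) < β := by linarith
  have hb : (0:ℝ) < 1 - β^k := by nlinarith
  have hmp : (0:ℝ) < m - p := by linarith
  have key : (m - p) / (1 - β^k) < β * (m - p) / (1 - β) := by
    rw [div_lt_div_iff₀ hb ha]
    nlinarith
  have heq : m / (1 - β) + m + β * p / (1 - β) = 2 * m / (1 - β) - β * (m - p) / (1 - β) := by
    field_simp
    ring
  rw [gt_iff_lt, heq]
  linarith

/-- on the oscillating cooperative equilibrium path, Bob prefers conforming
to deviating, for all sufficiently large `k`. -/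
theorem stmt15 (β p m : ℝ) (hβ : β ∈ Set.Ioo (1/2 : ℝ) 1)
    (hp : p ∈ Set.Icc (0:ℝ) 1) (hm : m ∈ Set.Icc (0:ℝ) 1) (hpm : p < m) :
    (∃ K : ℕ, ∀ k ≥ K,
      2 * m / (1 - β) - (m - p) / (1 - β^k) > m / (1 - β) + m + β * p / (1 - β)) ∧
    (∀ k : ℕ, 1 - β < β * (1 - β^k) →
      2 * m / (1 - β) - (m - p) / (1 - β^k) > m / (1 - β) + m + β * p / (1 - β)) := by
  obtain ⟨hβ1, hβ2⟩ := hβ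
  constructor
  · have htend : Filter.Tendsto (fun k : ℕ => β ^ k) Filter.atTop (nhds 0) :=
      tendsto_pow_atTop_nhds_zero_of_lt_one (by linarith) hβ2
    have hε : (0:ℝ) < 2 - 1/β := by
      rw [sub_pos, div_lt_iff₀ (by linarith)]; linarith
    have hev : ∀ᶠ k in Filter.atTop, β ^ k < 2 - 1/β :=
      htend.eventually (gt_mem_nhds hε)
    obtain ⟨K, hK⟩ := Filter.eventually_atTop.mp hev
    refine ⟨K, fun k hk => ?_⟩
    refine stmt15_main β p m hβ1 hβ2 hpm k ?_
    have := hK k hk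
    have hβ0 : (0:ℝ) < β := by linarith
    have h1 : β * (β ^ k) < β * (2 - 1/β) := by
      exact mul_lt_mul_of_pos_left this hβ0
    have h2 : β * (2 - 1/β) = 2*β - 1 := by field_simp
    nlinarith
  · exact fun k h => stmt15_main β p m hβ1 hβ2 hpm k h
end
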